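/- arXiv:1601.04475 — 2 statements merged into one kernel-verified Lean document; each statement's English description precedes it below -/
import Mathlib

section
/- For distinct complex numbers u_1^C,…,u_N^C and arbitrary u_1^B,…,u_N^B, for a sign ε = ±1 and x ∈ ℂ with x ∉ {u_j^C, u_j^C ∓ ic} for all j, one has Σ_{j=1}^N [−c² / ((x−u_j^C)(x−u_j^C + ε ic))] · [∏_{s=1}^N (u_j^C − u_s^B)] / [∏_{s≠j} (u_j^C − u_s^C)] = ε ic ∏_{s=1}^N [(x−u_s^B)/(x−u_s^C)] − ε ic ∏_{s=1}^N [(x−u_s^B+ε ic)/(x−u_s^C+ε ic)]. -/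
open Polynomial Lagrange Finset in
/-- Key partial fraction / Lagrange interpolation lemma. -/
lemma key_pf {N : ℕ} (uC uB : Fin N → ℂ) (huC : Function.Injective uC) (x : ℂ)
    (hx : ∀ j, x ≠ uC j) :
    ∑ j, (∏ s, (uC j - uB s)) / ((x - uC j) * ∏ s ∈ Finset.univ.erase j, (uC j - uC s))
      = (∏ s, (x - uB s)) / (∏ s, (x - uC s)) - 1 := by
  have hvs : Set.InjOn uC ↑(Finset.univ : Finset (Fin N)) := Function.Injective.injOn huC
  set P := nodal Finset.univ uB with hP
  set Q := nodal Finset.univ uC with hQ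
  have hdeg : (P - Q).degree < (#(Finset.univ : Finset (Fin N)) : ℕ) := by
    calc (P - Q).degree < P.degree := by
          refine degree_sub_lt ?_ nodal_ne_zero ?_
          · rw [hP, hQ, degree_nodal, degree_nodal]
          · rw [hP, hQ, nodal_monic.leadingCoeff, nodal_monic.leadingCoeff]
      _ = _ := by rw [hP, degree_nodal]
  have hQx : Q.eval x ≠ 0 := eval_nodal_not_at_node (fun i _ => hx i)
  have hinterp := Lagrange.eq_interpolate hvs hdeg
  have hev := congrArg (Polynomial.eval x) hinterp
  rw [eval_interpolate_not_at_node _ (fun i _ => hx i)] at hev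
  have hnodalQ : Q.eval x = ∏ s, (x - uC s) := eval_nodal
  have hnodalP : P.eval x = ∏ s, (x - uB s) := eval_nodal
  have hfev : ∀ i : Fin N, (P - Q).eval (uC i) = ∏ s, (uC i - uB s) := by
    intro i
    rw [eval_sub, eval_nodal_at_node (Finset.mem_univ i), sub_zero, hP, eval_nodal]
  have key : (P - Q).eval x
      = Q.eval x * ∑ i, nodalWeight Finset.univ uC i * (x - uC i)⁻¹ * ∏ s, (uC i - uB s) := by
    rw [hev]
    congr 1
    exact Finset.sum_congr rfl fun i _ => by rw [hfev]
  have hsum : ∑ j, (∏ s, (uC j - uB s)) / ((x - uC j) * ∏ s ∈ Finset.univ.erase j, (uC j - uC s))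
      = ∑ i, nodalWeight Finset.univ uC i * (x - uC i)⁻¹ * ∏ s, (uC i - uB s) := by
    refine Finset.sum_congr rfl fun i _ => ?_
    rw [nodalWeight, Finset.prod_inv_distrib, div_eq_mul_inv, mul_inv]
    ring
  rw [hsum]
  have := key
  rw [eval_sub, hnodalP, hnodalQ] at this
  have hQ' : (∏ s, (x - uC s)) ≠ 0 := hnodalQ ▸ hQx
  rw [eq_sub_iff_add_eq, eq_div_iff hQ']
  linear_combination -this

/-- the α = 0 summation identity used in the factorisation of
scalar products in the SU(3)-invariant XXX magnet. -/
theorem stmt_2 (N : ℕ) (c : ℂ) (hc : c ≠ 0) (ε : ℂ) (hε : ε = 1 ∨ ε = -1)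
    (uC uB : Fin N → ℂ) (huC : Function.Injective uC)
    (x : ℂ) (hx1 : ∀ j, x ≠ uC j) (hx2 : ∀ j, x ≠ uC j - ε * Complex.I * c) :
    ∑ j, (-c ^ 2 / ((x - uC j) * (x - uC j + ε * Complex.I * c)))
        * ((∏ s, (uC j - uB s)) / ∏ s ∈ Finset.univ.erase j, (uC j - uC s))
      = ε * Complex.I * c * ∏ s, (x - uB s) / (x - uC s)
        - ε * Complex.I * c *
            ∏ s, (x - uB s + ε * Complex.I * c) / (x - uC s + ε * Complex.I * c) := by
  set a : ℂ := ε * Complex.I * c with ha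
  have hε2 : ε ^ 2 = 1 := by rcases hε with h | h <;> rw [h] <;> ring
  have ha2 : a ^ 2 = -c ^ 2 := by
    rw [ha]; have := Complex.I_sq
    calc (ε * Complex.I * c) ^ 2 = ε ^ 2 * Complex.I ^ 2 * c ^ 2 := by ring
      _ = -c ^ 2 := by rw [hε2, this]; ring
  have hane : a ≠ 0 := by
    intro h
    have : a ^ 2 = 0 := by rw [h]; ring
    rw [ha2, neg_eq_zero, pow_eq_zero_iff (by norm_num)] at this
    exact hc this
  have hx2' : ∀ j, x + a ≠ uC j := by
    intro j h
    exact hx2 j (by rw [← h]; ring)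
  have key1 := key_pf uC uB huC x hx1
  have key2 := key_pf uC uB huC (x + a) hx2'
  have hd1 : ∀ j : Fin N, x - uC j ≠ 0 := fun j => sub_ne_zero_of_ne (hx1 j)
  have hd2 : ∀ j : Fin N, x - uC j + a ≠ 0 := by
    intro j h
    apply hx2' j
    linear_combination h
  have hden : ∀ j : Fin N, ∏ s ∈ Finset.univ.erase j, (uC j - uC s) ≠ 0 := by
    intro j
    refine Finset.prod_ne_zero_iff.mpr fun s hs => sub_ne_zero_of_ne ?_
    exact fun h => (Finset.mem_erase.mp hs).1 (huC h).symm
  -- rewrite LHS termwise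
  have hterm : ∀ j : Fin N,
      (-c ^ 2 / ((x - uC j) * (x - uC j + a)))
        * ((∏ s, (uC j - uB s)) / ∏ s ∈ Finset.univ.erase j, (uC j - uC s))
      = a * ((∏ s, (uC j - uB s)) / ((x - uC j) * ∏ s ∈ Finset.univ.erase j, (uC j - uC s)))
        - a * ((∏ s, (uC j - uB s)) / ((x + a - uC j) * ∏ s ∈ Finset.univ.erase j, (uC j - uC s))) := by
    intro j
    have e : x + a - uC j = x - uC j + a := by ring
    rw [e, ← ha2]
    field_simp [hd1 j, hd2 j, hden j]
    ring
  rw [Finset.sum_congr rfl fun j _ => hterm j, Finset.sum_sub_distrib,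
    ← Finset.mul_sum, ← Finset.mul_sum, key1, key2]
  rw [Finset.prod_div_distrib, Finset.prod_div_distrib]
  have e1 : ∏ s, (x - uB s + a) = ∏ s, (x + a - uB s) :=
    Finset.prod_congr rfl fun s _ => by ring
  have e2 : ∏ s, (x - uC s + a) = ∏ s, (x + a - uC s) :=
    Finset.prod_congr rfl fun s _ => by ring
  rw [e1, e2]
  ring
end

section
/- Let A be the (N+M)×(N+M) block matrix A = [[A^{(11)}, 0],[A^{(21)}, A^{(22)}]] with A^{(11)}_{kj} = (1/(u_j^C−u_k^B)) ∏_{s=1}^N(u_j^C−u_s^B)/∏_{s≠j}(u_j^C−u_s^C), A^{(21)}_{kj} = ∏_{s=1}^N(u_j^C−u_s^B)/∏_{s≠j}(u_j^C−u_s^C), and A^{(22)}_{kj} = [∏_{s=1}^M(v_j^B−v_s^C)/∏_{s≠j}(v_j^B−v_s^B)] · (ic/(v_j^B−v_k^C))^{1−δ_{kM}}. Then det A = (ic)^M · [Δ_N(ū^C)Δ_M(v̄^B)/(Δ_N(ū^B)Δ_M(v̄^C))] · ∏_{a≠M} g(v_a^C, v_M^C) / ∏_{a=1}^M g(v_a^B,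 v_M^C), where g(x,y) = ic/(x−y) and Δ_N(ū) = ∏_{j<k} g(u_j,u_k). -/
open Matrix Polynomial Finset


/-- product over erased diagonal splits into upper and lower triangular parts -/
lemma prod_erase_split {n : ℕ} (f : Fin n → Fin n → ℂ) :
    (∏ k, ∏ s ∈ Finset.univ.erase k, f k s)
      = (∏ j, ∏ k ∈ Finset.Ioi j, f j k) * (∏ j, ∏ k ∈ Finset.Ioi j, f k j) := by
  have h1 : ∀ k : Fin n, Finset.univ.erase k = Finset.Iio k ∪ Finset.Ioi k := by
    intro k; ext x; simp only [Finset.mem_erase, Finset.mem_univ, and_true, Finset.mem_union, Finset.mem_Iio, Finset.mem_Ioi]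
    exact ne_iff_lt_or_gt
  have h2 : ∀ k : Fin n, ∏ s ∈ Finset.univ.erase k, f k s
      = (∏ s ∈ Finset.Iio k, f k s) * ∏ s ∈ Finset.Ioi k, f k s := by
    intro k; rw [h1, Finset.prod_union (Finset.disjoint_Ioi_Iio k).symm]
  calc (∏ k, ∏ s ∈ Finset.univ.erase k, f k s)
      = (∏ k, ∏ s ∈ Finset.Iio k, f k s) * ∏ k, ∏ s ∈ Finset.Ioi k, f k s := by
        rw [← Finset.prod_mul_distrib]; exact Finset.prod_congr rfl fun k _ => h2 k
    _ = (∏ j, ∏ k ∈ Finset.Ioi j, f k j) * ∏ j, ∏ k ∈ Finset.Ioi j, f j k := by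
        congr 1
        exact Finset.prod_comm' (by intro x y; simp)
    _ = _ := mul_comm _ _

/-- determinant of a polynomial-evaluation matrix -/
lemma det_eval {n : ℕ} (p : Fin n → Polynomial ℂ) (hp : ∀ k, (p k).natDegree < n)
    (x : Fin n → ℂ) :
    (Matrix.of fun k j => (p k).eval (x j)).det
      = (Matrix.of fun (k i : Fin n) => (p k).coeff i).det * (Matrix.vandermonde x).det := by
  rw [← Matrix.det_transpose (Matrix.vandermonde x), ← Matrix.det_mul]
  congr 1
  ext k j
  simp only [Matrix.mul_apply, Matrix.of_apply, Matrix.transpose_apply, Matrix.vandermonde]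
  rw [Polynomial.eval_eq_sum_range' (hp k), ← Fin.sum_univ_eq_sum_range]

lemma detA11 {N : ℕ} (uB uC : Fin N → ℂ)
    (huB : Function.Injective uB) (huC : Function.Injective uC)
    (huu : ∀ i j, uC i ≠ uB j)
    (A11 : Matrix (Fin N) (Fin N) ℂ)
    (hA11 : ∀ k j, A11 k j =
      (1 / (uC j - uB k)) * ((∏ s, (uC j - uB s)) / ∏ s ∈ Finset.univ.erase j, (uC j - uC s))) :
    A11.det = (∏ j, ∏ k ∈ Finset.Ioi j, (uB j - uB k))
        / (∏ j, ∏ k ∈ Finset.Ioi j, (uC j - uC k)) := by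
  classical
  set p : Fin N → Polynomial ℂ := fun k => ∏ s ∈ Finset.univ.erase k, (X - C (uB s)) with hp
  have hdeg : ∀ k, (p k).natDegree < N := by
    intro k
    have h : (p k).natDegree = (Finset.univ.erase k).card := by
      rw [hp]
      rw [Polynomial.natDegree_prod _ _ (fun s _ => Polynomial.X_sub_C_ne_zero (uB s))]
      simp
    rw [h, Finset.card_erase_of_mem (Finset.mem_univ k)]
    simpa using Nat.sub_lt k.pos Nat.one_pos
  have hev : ∀ (w : Fin N → ℂ) (k j), (p k).eval (w j)
      = ∏ s ∈ Finset.univ.erase k, (w j - uB s) := by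
    intro w k j; simp [hp, Polynomial.eval_prod]
  have hccne : ∀ j, (∏ s ∈ Finset.univ.erase j, (uC j - uC s)) ≠ 0 := by
    intro j
    refine Finset.prod_ne_zero_iff.mpr fun s hs => sub_ne_zero.mpr fun h => ?_
    exact (Finset.mem_erase.mp hs).1 (huC h).symm
  have hA : A11 = Matrix.of fun k j =>
      (∏ s ∈ Finset.univ.erase j, (uC j - uC s))⁻¹ * (p k).eval (uC j) := by
    ext k j
    rw [hA11, Matrix.of_apply, hev]
    rw [← Finset.mul_prod_erase Finset.univ _ (Finset.mem_univ k)]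
    have h1 : uC j - uB k ≠ 0 := sub_ne_zero.mpr (huu j k)
    field_simp
  have e1 : A11.det = (∏ j, (∏ s ∈ Finset.univ.erase j, (uC j - uC s))⁻¹)
      * (Matrix.of fun k j => (p k).eval (uC j)).det := by
    rw [hA]; exact Matrix.det_mul_row _ _
  have e2 := det_eval p hdeg uC
  have e3 := det_eval p hdeg uB
  have ediag : (Matrix.of fun k j => (p k).eval (uB j))
      = Matrix.diagonal (fun k => ∏ s ∈ Finset.univ.erase k, (uB k - uB s)) := by
    ext k j
    rw [Matrix.of_apply, hev, Matrix.diagonal_apply]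
    by_cases h : k = j
    · subst h; rw [if_pos rfl]
    · rw [if_neg h]
      exact Finset.prod_eq_zero (Finset.mem_erase.mpr ⟨Ne.symm h, Finset.mem_univ j⟩) (by simp)
  rw [ediag, Matrix.det_diagonal] at e3
  have hVB : (Matrix.vandermonde uB).det ≠ 0 := Matrix.det_vandermonde_ne_zero_iff.mpr huB
  have hVC : (Matrix.vandermonde uC).det ≠ 0 := Matrix.det_vandermonde_ne_zero_iff.mpr huC
  have hdetC : (Matrix.of fun (k i : Fin N) => (p k).coeff i).det
      = (∏ k, ∏ s ∈ Finset.univ.erase k, (uB k - uB s)) / (Matrix.vandermonde uB).det := by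
    rw [eq_div_iff hVB]; exact e3.symm
  rw [e1, e2, hdetC, Finset.prod_inv_distrib]
  rw [prod_erase_split (fun j k => uC j - uC k), prod_erase_split (fun j k => uB j - uB k),
    ← Matrix.det_vandermonde uC, ← Matrix.det_vandermonde uB]
  have hPuC : (∏ j, ∏ k ∈ Finset.Ioi j, (uC j - uC k)) ≠ 0 := by
    refine Finset.prod_ne_zero_iff.mpr fun j _ => Finset.prod_ne_zero_iff.mpr fun k hk =>
      sub_ne_zero.mpr fun h => ?_
    exact absurd (huC h) (ne_of_gt (Finset.mem_Ioi.mp hk)).symm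
  have hPuB : (∏ j, ∏ k ∈ Finset.Ioi j, (uB j - uB k)) ≠ 0 := by
    refine Finset.prod_ne_zero_iff.mpr fun j _ => Finset.prod_ne_zero_iff.mpr fun k hk =>
      sub_ne_zero.mpr fun h => ?_
    exact absurd (huB h) (ne_of_gt (Finset.mem_Ioi.mp hk)).symm
  field_simp


lemma detA22 {m : ℕ} (c : ℂ) (hc : c ≠ 0) (vB vC : Fin (m + 1) → ℂ)
    (hvB : Function.Injective vB) (hvC : Function.Injective vC)
    (hvv : ∀ i j, vB i ≠ vC j)
    (A22 : Matrix (Fin (m + 1)) (Fin (m + 1)) ℂ)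
    (hA22 : ∀ k j, A22 k j =
      ((∏ s, (vB j - vC s)) / ∏ s ∈ Finset.univ.erase j, (vB j - vB s))
        * (if k = Fin.last m then 1 else Complex.I * c / (vB j - vC k))) :
    A22.det = (Complex.I * c) ^ m
      * ((∏ j, ∏ k ∈ Finset.Ioi j, (vC j - vC k)) / (∏ j, ∏ k ∈ Finset.Ioi j, (vB j - vB k)))
      * (∏ a, (vB a - vC (Fin.last m)))
      / (∏ a ∈ Finset.univ.erase (Fin.last m), (vC a - vC (Fin.last m))) := by
  classical
  have hBC : ∀ j k, vB j - vC k ≠ 0 := fun j k => sub_ne_zero.mpr (hvv j k)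
  -- the polynomials
  set q : Fin (m + 1) → Polynomial ℂ :=
    fun k => ∏ t ∈ (Finset.univ.erase (Fin.last m)).erase k, (X - C (vC t)) with hq
  have hdeg : ∀ k, (q k).natDegree < m + 1 := by
    intro k
    have h : (q k).natDegree = ((Finset.univ.erase (Fin.last m)).erase k).card := by
      rw [hq, Polynomial.natDegree_prod _ _ (fun s _ => Polynomial.X_sub_C_ne_zero (vC s))]
      simp
    rw [h]
    calc ((Finset.univ.erase (Fin.last m)).erase k).card
        ≤ (Finset.univ.erase (Fin.last m)).card :=
          Finset.card_le_card (Finset.erase_subset _ _)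
      _ = m := by simp [Finset.card_erase_of_mem]
      _ < m + 1 := Nat.lt_succ_self m
  have hev : ∀ (w : Fin (m + 1) → ℂ) (k j), (q k).eval (w j)
      = ∏ t ∈ (Finset.univ.erase (Fin.last m)).erase k, (w j - vC t) := by
    intro w k j; simp [hq, Polynomial.eval_prod]
  -- matrices R and S
  set R : Matrix (Fin (m + 1)) (Fin (m + 1)) ℂ :=
    Matrix.of fun k j => if k = Fin.last m then 1 else Complex.I * c / (vB j - vC k) with hR
  set S : Matrix (Fin (m + 1)) (Fin (m + 1)) ℂ :=
    Matrix.of fun k j => if k = Fin.last m then 1 else (vB j - vC k)⁻¹ with hS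
  have e1 : A22.det = (∏ j, ((∏ s, (vB j - vC s))
      / ∏ s ∈ Finset.univ.erase j, (vB j - vB s))) * R.det := by
    have hA : A22 = Matrix.of fun k j => ((∏ s, (vB j - vC s))
        / ∏ s ∈ Finset.univ.erase j, (vB j - vB s)) * R k j := by
      ext k j; rw [hA22]; rfl
    rw [hA]; exact Matrix.det_mul_row _ _
  have e2 : R.det = (∏ k, (if k = Fin.last m then (1 : ℂ) else Complex.I * c)) * S.det := by
    have h : R = Matrix.of fun k j =>
        (if k = Fin.last m then (1 : ℂ) else Complex.I * c) * S k j := by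
      ext k j
      by_cases h : k = Fin.last m <;> simp [hR, hS, h, div_eq_mul_inv]
    rw [h]; exact Matrix.det_mul_column _ _
  -- column rescaling of S gives eval matrix at vB
  have e3 : (Matrix.of fun k j => (q k).eval (vB j)).det
      = (∏ j, ∏ t ∈ Finset.univ.erase (Fin.last m), (vB j - vC t)) * S.det := by
    have h : (Matrix.of fun k j => (q k).eval (vB j))
        = Matrix.of fun k j => (∏ t ∈ Finset.univ.erase (Fin.last m), (vB j - vC t)) * S k j := by
      ext k j
      rw [Matrix.of_apply, hev, Matrix.of_apply]
      by_cases h : k = Fin.last m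
      · subst h; rw [hS]; simp [Finset.erase_idem]
      · have hk : k ∈ Finset.univ.erase (Fin.last m) :=
          Finset.mem_erase.mpr ⟨h, Finset.mem_univ k⟩
        rw [hS]
        simp only [Matrix.of_apply, if_neg h]
        rw [← Finset.mul_prod_erase _ _ hk]
        field_simp [hBC j k]
    rw [h]; exact Matrix.det_mul_row _ _
  -- eval matrix at vC is upper triangular
  have e6 : (Matrix.of fun k j => (q k).eval (vC j)).det
      = ∏ k, ∏ t ∈ (Finset.univ.erase (Fin.last m)).erase k, (vC k - vC t) := by
    have htri : (Matrix.of fun k j => (q k).eval (vC j)).BlockTriangular id := by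
      intro k j hlt
      rw [Matrix.of_apply, hev]
      refine Finset.prod_eq_zero (Finset.mem_erase.mpr ⟨ne_of_lt hlt, Finset.mem_erase.mpr
        ⟨ne_of_lt (lt_of_lt_of_le hlt (Fin.le_last k)), Finset.mem_univ j⟩⟩) (by simp)
    rw [Matrix.det_of_upperTriangular htri]
    exact Finset.prod_congr rfl fun k _ => by rw [Matrix.of_apply, hev]
  have e4 := det_eval q hdeg vB
  have e5 := det_eval q hdeg vC
  have hVB : (Matrix.vandermonde vB).det ≠ 0 := Matrix.det_vandermonde_ne_zero_iff.mpr hvB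
  have hVC : (Matrix.vandermonde vC).det ≠ 0 := Matrix.det_vandermonde_ne_zero_iff.mpr hvC
  have hdetC : (Matrix.of fun (k i : Fin (m + 1)) => (q k).coeff i).det
      = (∏ k, ∏ t ∈ (Finset.univ.erase (Fin.last m)).erase k, (vC k - vC t))
        / (Matrix.vandermonde vC).det := by
    rw [eq_div_iff hVC, ← e6, e5]
  have heP : (∏ j, ∏ t ∈ Finset.univ.erase (Fin.last m), (vB j - vC t)) ≠ 0 :=
    Finset.prod_ne_zero_iff.mpr fun j _ => Finset.prod_ne_zero_iff.mpr fun t _ => hBC j t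
  have hSdet : S.det = ((∏ k, ∏ t ∈ (Finset.univ.erase (Fin.last m)).erase k, (vC k - vC t))
      / (Matrix.vandermonde vC).det * (Matrix.vandermonde vB).det)
      / (∏ j, ∏ t ∈ Finset.univ.erase (Fin.last m), (vB j - vC t)) := by
    have h := e3
    rw [e4, hdetC] at h
    rw [eq_div_iff heP, mul_comm]
    exact h.symm
  have hicm : (∏ k, (if k = Fin.last m then (1 : ℂ) else Complex.I * c))
      = (Complex.I * c) ^ m := by
    rw [← Finset.mul_prod_erase Finset.univ _ (Finset.mem_univ (Fin.last m)), if_pos rfl, one_mul]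
    rw [Finset.prod_congr rfl (fun k hk => if_neg (Finset.mem_erase.mp hk).1), Finset.prod_const]
    congr 1
    simp [Finset.card_erase_of_mem]
  have hQ : (∏ j, ((∏ s, (vB j - vC s)) / ∏ s ∈ Finset.univ.erase j, (vB j - vB s)))
      = (∏ j, ∏ s, (vB j - vC s)) / (∏ j, ∏ s ∈ Finset.univ.erase j, (vB j - vB s)) :=
    Finset.prod_div_distrib _ _
  have hePA : (∏ j, (vB j - vC (Fin.last m)))
      * (∏ j, ∏ t ∈ Finset.univ.erase (Fin.last m), (vB j - vC t))
      = ∏ j, ∏ s, (vB j - vC s) := by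
    rw [← Finset.prod_mul_distrib]
    exact Finset.prod_congr rfl fun j _ =>
      Finset.mul_prod_erase Finset.univ (fun s => vB j - vC s) (Finset.mem_univ (Fin.last m))
  have hDB : (∏ k, ∏ t ∈ (Finset.univ.erase (Fin.last m)).erase k, (vC k - vC t))
      * (∏ k ∈ Finset.univ.erase (Fin.last m), (vC k - vC (Fin.last m)))
      = ∏ k, ∏ s ∈ Finset.univ.erase k, (vC k - vC s) := by
    rw [← Finset.mul_prod_erase Finset.univ
      (fun k => ∏ t ∈ (Finset.univ.erase (Fin.last m)).erase k, (vC k - vC t))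
      (Finset.mem_univ (Fin.last m))]
    rw [← Finset.mul_prod_erase Finset.univ
      (fun k => ∏ s ∈ Finset.univ.erase k, (vC k - vC s)) (Finset.mem_univ (Fin.last m))]
    simp only [Finset.erase_idem]
    rw [mul_assoc, ← Finset.prod_mul_distrib]
    congr 1
    refine Finset.prod_congr rfl fun k hk => ?_
    rw [mul_comm, Finset.erase_right_comm]
    exact Finset.mul_prod_erase (Finset.univ.erase k) (fun t => vC k - vC t)
      (Finset.mem_erase.mpr ⟨fun hLk => (Finset.mem_erase.mp hk).1 hLk.symm, Finset.mem_univ _⟩)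
  have hFvC : (∏ k, ∏ s ∈ Finset.univ.erase k, (vC k - vC s))
      = (∏ j, ∏ k ∈ Finset.Ioi j, (vC j - vC k)) * (Matrix.vandermonde vC).det := by
    rw [prod_erase_split (fun j k => vC j - vC k), Matrix.det_vandermonde]
  have hFvB : (∏ k, ∏ s ∈ Finset.univ.erase k, (vB k - vB s))
      = (∏ j, ∏ k ∈ Finset.Ioi j, (vB j - vB k)) * (Matrix.vandermonde vB).det := by
    rw [prod_erase_split (fun j k => vB j - vB k), Matrix.det_vandermonde]
  have hB : (∏ k ∈ Finset.univ.erase (Fin.last m), (vC k - vC (Fin.last m))) ≠ 0 :=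
    Finset.prod_ne_zero_iff.mpr fun k hk => sub_ne_zero.mpr
      fun h => (Finset.mem_erase.mp hk).1 (hvC h)
  have hA' : (∏ j, (vB j - vC (Fin.last m))) ≠ 0 :=
    Finset.prod_ne_zero_iff.mpr fun j _ => hBC j _
  have hG : (∏ j, ∏ s, (vB j - vC s)) ≠ 0 :=
    Finset.prod_ne_zero_iff.mpr fun j _ => Finset.prod_ne_zero_iff.mpr fun s _ => hBC j s
  have hPvB : (∏ j, ∏ k ∈ Finset.Ioi j, (vB j - vB k)) ≠ 0 := by
    refine Finset.prod_ne_zero_iff.mpr fun j _ => Finset.prod_ne_zero_iff.mpr fun k hk =>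
      sub_ne_zero.mpr fun h => ?_
    exact absurd (hvB h) (ne_of_gt (Finset.mem_Ioi.mp hk)).symm
  have hPvC : (∏ j, ∏ k ∈ Finset.Ioi j, (vC j - vC k)) ≠ 0 := by
    refine Finset.prod_ne_zero_iff.mpr fun j _ => Finset.prod_ne_zero_iff.mpr fun k hk =>
      sub_ne_zero.mpr fun h => ?_
    exact absurd (hvC h) (ne_of_gt (Finset.mem_Ioi.mp hk)).symm
  have hD : (∏ k, ∏ t ∈ (Finset.univ.erase (Fin.last m)).erase k, (vC k - vC t))
      = (∏ j, ∏ k ∈ Finset.Ioi j, (vC j - vC k)) * (Matrix.vandermonde vC).det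
        / (∏ k ∈ Finset.univ.erase (Fin.last m), (vC k - vC (Fin.last m))) := by
    rw [eq_div_iff hB, ← hFvC]
    exact hDB
  have heP2 : (∏ j, ∏ t ∈ Finset.univ.erase (Fin.last m), (vB j - vC t))
      = (∏ j, ∏ s, (vB j - vC s)) / (∏ j, (vB j - vC (Fin.last m))) := by
    rw [eq_div_iff hA', mul_comm]
    exact hePA
  rw [e1, e2, hicm, hSdet, hQ, hFvB, hD, heP2]
  field_simp

lemma scalar_fin (ic puB puC pvB pvC A B : ℂ) (m SN SM : ℕ)
    (hic : ic ≠ 0) (h1 : puB ≠ 0) (h2 : puC ≠ 0) (h3 : pvB ≠ 0) (h4 : pvC ≠ 0)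
    (h5 : A ≠ 0) (h6 : B ≠ 0) :
    puB / puC * (ic ^ m * (pvC / pvB) * A / B)
      = ic ^ (m + 1) * (ic ^ SN / puC * (ic ^ SM / pvB) / (ic ^ SN / puB * (ic ^ SM / pvC)))
        * (ic ^ m / B) / (ic ^ (m + 1) / A) := by
  have e1 : ic ^ SN ≠ 0 := pow_ne_zero _ hic
  have e2 : ic ^ SM ≠ 0 := pow_ne_zero _ hic
  have e3 : ic ^ (m + 1) ≠ 0 := pow_ne_zero _ hic
  have hr : ic ^ SN / puC * (ic ^ SM / pvB) / (ic ^ SN / puB * (ic ^ SM / pvC))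
      = puB * pvC / (puC * pvB) := by field_simp
  have hr2 : ∀ r : ℂ, ic ^ (m + 1) * r * (ic ^ m / B) / (ic ^ (m + 1) / A)
      = ic ^ m * r * A / B := by intro r; field_simp
  rw [hr, hr2]
  field_simp





/-- determinant of the auxiliary block matrix A used to
transform the scalar-product determinant of the SU(3)-invariant XXX chain.
Here g(x,y) = ic/(x-y) and Δ(u) = ∏_{j<k} g(u_j,u_k); M = m+1 and the
index `Fin.last m` plays the role of the distinguished last index M. -/
theorem stmt_4 (N m : ℕ) (c : ℂ) (hc : c ≠ 0)
    (uB uC : Fin N → ℂ) (vB vC : Fin (m + 1) → ℂ)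
    (huB : Function.Injective uB) (huC : Function.Injective uC)
    (hvB : Function.Injective vB) (hvC : Function.Injective vC)
    (huu : ∀ i j, uC i ≠ uB j) (hvv : ∀ i j, vB i ≠ vC j)
    (A11 : Matrix (Fin N) (Fin N) ℂ) (A21 : Matrix (Fin (m + 1)) (Fin N) ℂ)
    (A22 : Matrix (Fin (m + 1)) (Fin (m + 1)) ℂ)
    (hA11 : ∀ k j, A11 k j =
      (1 / (uC j - uB k)) * ((∏ s, (uC j - uB s)) / ∏ s ∈ Finset.univ.erase j, (uC j - uC s)))
    (hA21 : ∀ (k : Fin (m + 1)) (j : Fin N), A21 k j =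
      (∏ s, (uC j - uB s)) / ∏ s ∈ Finset.univ.erase j, (uC j - uC s))
    (hA22 : ∀ k j, A22 k j =
      ((∏ s, (vB j - vC s)) / ∏ s ∈ Finset.univ.erase j, (vB j - vB s))
        * (if k = Fin.last m then 1 else Complex.I * c / (vB j - vC k))) :
    (Matrix.fromBlocks A11 0 A21 A22).det
      = (Complex.I * c) ^ (m + 1)
        * ((∏ j, ∏ k ∈ Finset.Ioi j, Complex.I * c / (uC j - uC k))
            * (∏ j, ∏ k ∈ Finset.Ioi j, Complex.I * c / (vB j - vB k))
           / ((∏ j, ∏ k ∈ Finset.Ioi j, Complex.I * c / (uB j - uB k))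
            * (∏ j, ∏ k ∈ Finset.Ioi j, Complex.I * c / (vC j - vC k))))
        * (∏ a ∈ Finset.univ.erase (Fin.last m),
            Complex.I * c / (vC a - vC (Fin.last m)))
        / (∏ a, Complex.I * c / (vB a - vC (Fin.last m))) := by
  classical
  have hic : Complex.I * c ≠ 0 := mul_ne_zero Complex.I_ne_zero hc
  rw [Matrix.det_fromBlocks_zero₁₂, detA11 uB uC huB huC huu A11 hA11,
    detA22 c hc vB vC hvB hvC hvv A22 hA22]
  -- convert the g-products on the RHS
  simp only [Finset.prod_div_distrib, Finset.prod_const, Finset.prod_pow_eq_pow_sum]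
  have hcard1 : (Finset.univ.erase (Fin.last m)).card = m := by
    simp [Finset.card_erase_of_mem]
  have hcard2 : (Finset.univ : Finset (Fin (m + 1))).card = m + 1 := by simp
  rw [hcard1, hcard2]
  -- nonzeroness of all the atoms
  have hPuB : (∏ j, ∏ k ∈ Finset.Ioi j, (uB j - uB k)) ≠ 0 := by
    refine Finset.prod_ne_zero_iff.mpr fun j _ => Finset.prod_ne_zero_iff.mpr fun k hk =>
      sub_ne_zero.mpr fun h => ?_
    exact absurd (huB h) (ne_of_gt (Finset.mem_Ioi.mp hk)).symm
  have hPuC : (∏ j, ∏ k ∈ Finset.Ioi j, (uC j - uC k)) ≠ 0 := by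
    refine Finset.prod_ne_zero_iff.mpr fun j _ => Finset.prod_ne_zero_iff.mpr fun k hk =>
      sub_ne_zero.mpr fun h => ?_
    exact absurd (huC h) (ne_of_gt (Finset.mem_Ioi.mp hk)).symm
  have hPvB : (∏ j, ∏ k ∈ Finset.Ioi j, (vB j - vB k)) ≠ 0 := by
    refine Finset.prod_ne_zero_iff.mpr fun j _ => Finset.prod_ne_zero_iff.mpr fun k hk =>
      sub_ne_zero.mpr fun h => ?_
    exact absurd (hvB h) (ne_of_gt (Finset.mem_Ioi.mp hk)).symm
  have hPvC : (∏ j, ∏ k ∈ Finset.Ioi j, (vC j - vC k)) ≠ 0 := by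
    refine Finset.prod_ne_zero_iff.mpr fun j _ => Finset.prod_ne_zero_iff.mpr fun k hk =>
      sub_ne_zero.mpr fun h => ?_
    exact absurd (hvC h) (ne_of_gt (Finset.mem_Ioi.mp hk)).symm
  have hA' : (∏ a, (vB a - vC (Fin.last m))) ≠ 0 :=
    Finset.prod_ne_zero_iff.mpr fun a _ => sub_ne_zero.mpr (hvv a _)
  have hB : (∏ a ∈ Finset.univ.erase (Fin.last m), (vC a - vC (Fin.last m))) ≠ 0 :=
    Finset.prod_ne_zero_iff.mpr fun a ha => sub_ne_zero.mpr
      fun h => (Finset.mem_erase.mp ha).1 (hvC h)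
  exact scalar_fin (Complex.I * c) _ _ _ _ _ _ m
    (∑ i : Fin N, (Finset.Ioi i).card) (∑ i : Fin (m + 1), (Finset.Ioi i).card)
    hic hPuB hPuC hPvB hPvC hA' hB
end
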